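/- arXiv:1207.4252 — 2 statements merged into one kernel-verified Lean document; each statement's English description precedes it below -/
import Mathlib

section
/- Consider the minimization over K-tuples of 2×2 real positive semidefinite matrices V_1,…,V_K with tr(V_j)=1, of f(V) = Σ_{j=1}^K tr(V_j²) + 2α Σ_{1≤j<i≤K} tr(V_j V_i), where 0<α<1. The minimum is attained at V_j = (1/2)I for all j, and the minimal value equals K/2 + α·K(K−1)/2. -/
/-!
Writing `S = ∑ V_j`, the objective is the convex combination
`(1 - α) ∑ tr(V_j²) + α tr(S²)`. For a symmetric `n × n` matrix `tr(M)² ≤ n tr(M²)`, so each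
`tr(V_j²) ≥ 1/2` and `tr(S²) ≥ K²/2`; both bounds are attained at `V_j = I/2`.
-/

open Matrix Finset

/-- The objective `∑ tr(V_j²) + 2α ∑_{j<i} tr(V_j V_i)`. -/
noncomputable def objF {K : ℕ} (α : ℝ) (V : Fin K → Matrix (Fin 2) (Fin 2) ℝ) : ℝ :=
  (∑ j, (V j * V j).trace) + 2 * α * ∑ j, ∑ i ∈ Finset.Ioi j, (V j * V i).trace

theorem Finset.sum_sum_eq_sum_add_two_mul_sum_sum_Ioi {ι R : Type*} [CommSemiring R]
    [LinearOrder ι] [Fintype ι] [LocallyFiniteOrderTop ι] [LocallyFiniteOrderBot ι]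
    (f : ι → ι → R) (hf : ∀ i j, f i j = f j i) :
    ∑ i, ∑ j, f i j = ∑ i, f i i + 2 * ∑ i, ∑ j ∈ Ioi i, f i j := by
  classical
  have hoff := sum_sum_Ioi_add_eq_sum_sum_off_diag f
  have hIoi : ∀ i, ∑ j ∈ Ioi i, (f j i + f i j) = 2 * ∑ j ∈ Ioi i, f i j := fun i => by
    rw [mul_sum]; exact sum_congr rfl fun j _ => by rw [hf j i, two_mul]
  have hcompl : ∀ i, ∑ j ∈ {i}ᶜ, f j i = ∑ j ∈ {i}ᶜ, f i j := fun i =>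
    sum_congr rfl fun j _ => hf j i
  simp only [hIoi, hcompl, ← mul_sum] at hoff
  rw [hoff, ← sum_add_distrib]
  exact sum_congr rfl fun i _ => Fintype.sum_eq_add_sum_compl i (f i)

theorem Matrix.IsHermitian.trace_mul_self_eq_sum_sq {n : Type*} [Fintype n]
    {M : Matrix n n ℝ} (hM : M.IsHermitian) : (M * M).trace = ∑ i, ∑ j, M i j ^ 2 := by
  simp only [trace, diag, mul_apply, sq]
  exact sum_congr rfl fun i _ => sum_congr rfl fun j _ => by rw [← hM.apply i j, star_trivial]

theorem Matrix.IsHermitian.sq_trace_le_card_mul_trace_mul_self {n : Type*} [Fintype n]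
    {M : Matrix n n ℝ} (hM : M.IsHermitian) : M.trace ^ 2 ≤ Fintype.card n * (M * M).trace := by
  have hdiag : ∑ i, M i i ^ 2 ≤ (M * M).trace := by
    rw [hM.trace_mul_self_eq_sum_sq]
    exact sum_le_sum fun i _ => single_le_sum (fun j _ => sq_nonneg (M i j)) (mem_univ i)
  calc M.trace ^ 2 ≤ Fintype.card n * ∑ i, M i i ^ 2 := sq_sum_le_card_mul_sum_sq
    _ ≤ Fintype.card n * (M * M).trace := by gcongr

theorem objF_eq {K : ℕ} (α : ℝ) (V : Fin K → Matrix (Fin 2) (Fin 2) ℝ) :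
    objF α V = (1 - α) * ∑ j, (V j * V j).trace + α * ((∑ j, V j) * ∑ j, V j).trace := by
  have hS : ((∑ j, V j) * ∑ j, V j).trace
      = ∑ j, (V j * V j).trace + 2 * ∑ j, ∑ i ∈ Ioi j, (V j * V i).trace := by
    simp only [sum_mul_sum, trace_sum]
    exact sum_sum_eq_sum_add_two_mul_sum_sum_Ioi _ fun j i => trace_mul_comm (V j) (V i)
  rw [objF, hS]
  ring

theorem objF_const_half_one (K : ℕ) (α : ℝ) :
    objF (K := K) α (fun _ => (1 / 2 : ℝ) • (1 : Matrix (Fin 2) (Fin 2) ℝ))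
      = (K : ℝ) / 2 + α * (K * (K - 1)) / 2 := by
  have hS : ∑ _j : Fin K, (1 / 2 : ℝ) • (1 : Matrix (Fin 2) (Fin 2) ℝ) = ((K : ℝ) / 2) • 1 := by
    rw [sum_const, card_univ, Fintype.card_fin, ← Nat.cast_smul_eq_nsmul ℝ, smul_smul]
    ring_nf
  rw [objF_eq, hS]
  simp only [smul_mul_smul, mul_one, trace_smul, trace_one, Fintype.card_fin, sum_const,
    card_univ, smul_eq_mul, nsmul_eq_mul]
  ring

theorem le_objF {K : ℕ} {α : ℝ} (hα : 0 ≤ α) (hα1 : α ≤ 1) {V : Fin K → Matrix (Fin 2) (Fin 2) ℝ}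
    (hV : ∀ j, (V j).IsHermitian ∧ (V j).trace = 1) :
    (K : ℝ) / 2 + α * (K * (K - 1)) / 2 ≤ objF α V := by
  have hdiag : (K : ℝ) / 2 ≤ ∑ j, (V j * V j).trace := by
    calc (K : ℝ) / 2 = ∑ _j : Fin K, (1 / 2 : ℝ) := by
          simp only [sum_const, card_univ, Fintype.card_fin, nsmul_eq_mul]; ring
      _ ≤ ∑ j, (V j * V j).trace := sum_le_sum fun j _ => by
          have h := (hV j).1.sq_trace_le_card_mul_trace_mul_self
          rw [(hV j).2, Fintype.card_fin] at h
          norm_num at h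
          linarith
  have hsum : (K : ℝ) ^ 2 / 2 ≤ ((∑ j, V j) * ∑ j, V j).trace := by
    have hS : (∑ j, V j).IsHermitian := isSelfAdjoint_sum univ fun j _ => (hV j).1
    have h := hS.sq_trace_le_card_mul_trace_mul_self
    simp only [trace_sum, fun j => (hV j).2, sum_const, card_univ, Fintype.card_fin,
      nsmul_eq_mul, mul_one, Nat.cast_ofNat] at h
    linarith
  rw [objF_eq]
  nlinarith [mul_le_mul_of_nonneg_left hdiag (sub_nonneg.2 hα1), mul_le_mul_of_nonneg_left hsum hα]

theorem stmt3_general (K : ℕ) (α : ℝ) (hα : 0 < α) (hα1 : α < 1) :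
    IsLeast {y : ℝ | ∃ V : Fin K → Matrix (Fin 2) (Fin 2) ℝ,
        (∀ j, (V j).PosSemidef ∧ (V j).trace = 1) ∧ y = objF α V}
      ((K : ℝ) / 2 + α * (K * (K - 1)) / 2) ∧
    objF (K := K) α (fun _ : Fin K => (1 / 2 : ℝ) • (1 : Matrix (Fin 2) (Fin 2) ℝ))
      = (K : ℝ) / 2 + α * (K * (K - 1)) / 2 := by
  have hhalf : ((1 / 2 : ℝ) • (1 : Matrix (Fin 2) (Fin 2) ℝ)).PosSemidef :=
    PosSemidef.one.smul (by norm_num)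
  have htr : ((1 / 2 : ℝ) • (1 : Matrix (Fin 2) (Fin 2) ℝ)).trace = 1 := by
    rw [trace_smul, trace_one, Fintype.card_fin]; norm_num
  refine ⟨⟨⟨_, fun _ => ⟨hhalf, htr⟩, (objF_const_half_one K α).symm⟩, ?_⟩,
    objF_const_half_one K α⟩
  rintro _ ⟨V, hV, rfl⟩
  exact le_objF hα.le hα1.le fun j => ⟨(hV j).1.1, (hV j).2⟩

/-- Minimizing `∑ tr(V_j²) + 2α ∑_{j<i} tr(V_j V_i)` over K-tuples of 2×2 PSD
matrices of trace 1: the minimum is attained at `V_j = (1/2) I` for all `j`, and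
the minimal value is `K/2 + α K(K−1)/2`. -/
theorem stmt3 (K : ℕ) (hK : 1 ≤ K) (α : ℝ) (hα : 0 < α) (hα1 : α < 1) :
    IsLeast {y : ℝ | ∃ V : Fin K → Matrix (Fin 2) (Fin 2) ℝ,
        (∀ j, (V j).PosSemidef ∧ (V j).trace = 1) ∧ y = objF α V}
      ((K : ℝ) / 2 + α * (K * (K - 1)) / 2) ∧
    objF (K := K) α (fun _ : Fin K => (1 / 2 : ℝ) • (1 : Matrix (Fin 2) (Fin 2) ℝ))
      = (K : ℝ) / 2 + α * (K * (K - 1)) / 2 :=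
  stmt3_general K α hα hα1
end

section
/- For treating interference as noise with sum rate R_sum(P) = Σ_{j=1}^K log(1 + c_j P/(K + P·d_j)), where c_j = |C_jj|² and d_j = Σ_{i≠j}|C_ji|², the wideband slope S_0 = −2(Ṙ_sum(0))²/R̈_sum(0) equals 2(Σ_j c_j)²/(Σ_j (c_j² + 2 d_j c_j)). -/
/-!
Writing `1 + c P / (κ + P d) = (κ + P (c + d)) / (κ + P d)`, each summand of the sum rate has
derivative `(c + d) / (κ + P (c + d)) - d / (κ + P d)` near `P = 0`. At `P = 0` this gives
`Ṙ(0) = (∑ c_j) / κ` and `R̈(0) = -(∑ ((c_j + d_j)² - d_j²)) / κ²`, and the factors `κ` cancel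
in the wideband slope.
-/

open Finset Filter Topology

noncomputable def widebandSlope (R : ℝ → ℝ) : ℝ :=
  -2 * deriv R 0 ^ 2 / deriv (deriv R) 0

section SumRate

variable {κ : ℝ}

theorem hasDerivAt_log_one_add_mul_div {c d P : ℝ} (hcd : κ + P * (c + d) ≠ 0)
    (hd : κ + P * d ≠ 0) :
    HasDerivAt (fun x => Real.log (1 + c * x / (κ + x * d)))
      ((c + d) / (κ + P * (c + d)) - d / (κ + P * d)) P := by
  have hu : HasDerivAt (fun x => 1 + c * x / (κ + x * d)) (c * κ / (κ + P * d) ^ 2) P :=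
    ((hasDerivAt_id' P).const_mul c |>.div
      ((hasDerivAt_mul_const d).const_add κ) hd).const_add 1 |>.congr_deriv (by ring)
  have hu_eq : 1 + c * P / (κ + P * d) = (κ + P * (c + d)) / (κ + P * d) := by
    field_simp
    ring
  refine hu.log (hu_eq ▸ div_ne_zero hcd hd) |>.congr_deriv ?_
  rw [hu_eq, div_sub_div _ _ hcd hd, div_div_div_eq,
    div_eq_div_iff (mul_ne_zero (pow_ne_zero 2 hd) hcd) (mul_ne_zero hcd hd)]
  ring

theorem hasDerivAt_div_const_add_mul_zero (hκ : κ ≠ 0) (b : ℝ) :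
    HasDerivAt (fun x => b / (κ + x * b)) (-(b * b) / κ ^ 2) 0 :=
  (hasDerivAt_const (0 : ℝ) b).div ((hasDerivAt_mul_const b).const_add κ)
    (by simpa using hκ) |>.congr_deriv (by simp)

theorem eventually_const_add_mul_ne_zero (hκ : κ ≠ 0) (b : ℝ) :
    ∀ᶠ P in 𝓝 (0 : ℝ), κ + P * b ≠ 0 :=
  (continuous_const.add (continuous_id.mul continuous_const)).continuousAt.eventually_ne
    (by simpa using hκ)

variable {ι : Type*} (s : Finset ι) (c d : ι → ℝ)

theorem eventually_hasDerivAt_sum_log_one_add_mul_div (hκ : κ ≠ 0) :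
    ∀ᶠ P in 𝓝 (0 : ℝ), HasDerivAt (fun x => ∑ j ∈ s, Real.log (1 + c j * x / (κ + x * d j)))
      (∑ j ∈ s, ((c j + d j) / (κ + P * (c j + d j)) - d j / (κ + P * d j))) P := by
  have hne : ∀ᶠ P in 𝓝 (0 : ℝ), ∀ j ∈ s, κ + P * (c j + d j) ≠ 0 ∧ κ + P * d j ≠ 0 :=
    (s.eventually_all).2 fun j _ =>
      (eventually_const_add_mul_ne_zero hκ _).and (eventually_const_add_mul_ne_zero hκ _)
  filter_upwards [hne] with P hP
  exact HasDerivAt.fun_sum fun j hj => hasDerivAt_log_one_add_mul_div (hP j hj).1 (hP j hj).2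

theorem deriv_sum_log_one_add_mul_div_zero (hκ : κ ≠ 0) :
    deriv (fun P => ∑ j ∈ s, Real.log (1 + c j * P / (κ + P * d j))) 0 = (∑ j ∈ s, c j) / κ := by
  rw [(eventually_hasDerivAt_sum_log_one_add_mul_div s c d hκ).self_of_nhds.deriv, sum_div]
  refine sum_congr rfl fun j _ => ?_
  simp only [zero_mul, add_zero]
  ring

theorem deriv_deriv_sum_log_one_add_mul_div_zero (hκ : κ ≠ 0) :
    deriv (deriv fun P => ∑ j ∈ s, Real.log (1 + c j * P / (κ + P * d j))) 0 =
      -(∑ j ∈ s, (c j ^ 2 + 2 * d j * c j)) / κ ^ 2 := by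
  have hderiv : deriv (fun P => ∑ j ∈ s, Real.log (1 + c j * P / (κ + P * d j))) =ᶠ[𝓝 0]
      fun P => ∑ j ∈ s, ((c j + d j) / (κ + P * (c j + d j)) - d j / (κ + P * d j)) :=
    (eventually_hasDerivAt_sum_log_one_add_mul_div s c d hκ).mono fun _ h => h.deriv
  have hsecond := HasDerivAt.fun_sum (u := s) fun j _ =>
    (hasDerivAt_div_const_add_mul_zero hκ (c j + d j)).fun_sub
      (hasDerivAt_div_const_add_mul_zero hκ (d j))
  rw [hderiv.deriv_eq, hsecond.deriv, neg_div, sum_div, ← sum_neg_distrib]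
  refine sum_congr rfl fun j _ => ?_
  ring

theorem widebandSlope_sum_log_one_add_mul_div (hκ : κ ≠ 0) :
    widebandSlope (fun P => ∑ j ∈ s, Real.log (1 + c j * P / (κ + P * d j))) =
      2 * (∑ j ∈ s, c j) ^ 2 / ∑ j ∈ s, (c j ^ 2 + 2 * d j * c j) := by
  rw [widebandSlope, deriv_sum_log_one_add_mul_div_zero s c d hκ,
    deriv_deriv_sum_log_one_add_mul_div_zero s c d hκ]
  rcases eq_or_ne (∑ j ∈ s, (c j ^ 2 + 2 * d j * c j)) 0 with hS | hS
  · simp [hS]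
  · field_simp

end SumRate

theorem stmt11_general (K : ℕ) (c d : Fin K → ℝ) :
    let Rsum : ℝ → ℝ := fun P => ∑ j, Real.log (1 + c j * P / ((K : ℝ) + P * d j));
    -2 * (deriv Rsum 0) ^ 2 / deriv (deriv Rsum) 0 = 2 * (∑ j, c j) ^ 2 / (∑ j, ((c j) ^ 2 + 2 * d j * c j)) := by
  rcases Nat.eq_zero_or_pos K with rfl | hK
  · simp
  · exact widebandSlope_sum_log_one_add_mul_div univ c d (Nat.cast_ne_zero.2 hK.ne')

/-- For treating interference as noise with
`R_sum(P) = ∑ log(1 + c_j P/(K + P d_j))`, the wideband slope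
`−2 Ṙ(0)² / R̈(0)` equals `2 (∑ c_j)² / ∑ (c_j² + 2 d_j c_j)`. -/
theorem stmt11 (K : ℕ) (hK : 1 ≤ K) (c d : Fin K → ℝ)
    (hc : ∀ j, 0 < c j) (hd : ∀ j, 0 ≤ d j) :
    let Rsum : ℝ → ℝ := fun P => ∑ j, Real.log (1 + c j * P / ((K : ℝ) + P * d j));
    -2 * (deriv Rsum 0) ^ 2 / deriv (deriv Rsum) 0 = 2 * (∑ j, c j) ^ 2 / (∑ j, ((c j) ^ 2 + 2 * d j * c j)) :=
  stmt11_general K c d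
end
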